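/- With Π̂^{mat}(s) as defined from the zero-temperature quark loop (ζ > ξ > 0), one has Π̂^{mat}(s) = O(s) as s → +∞; i.e., there exist C, s₀ > 0 with |Π̂^{mat}(s)| ≤ C·s for all s ≥ s₀. -/

import Mathlib

open Filter Topology Asymptotics

/-- The zero-temperature quark matter polarization `Π̂^{mat}(s)` in the
long-wavelength limit, for chemical potential exceeding quark mass (ζ > ξ > 0). -/
noncomputable def quarkMatterPol (c ζ ξ : ℝ) (s : ℝ) : ℝ :=
  c * (4 * Real.sqrt (ζ * (ζ - ξ))
    + 2 * s * Real.log (Real.sqrt ξ / (Real.sqrt ζ + Real.sqrt (ζ - ξ)))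
    + (Real.sqrt s)⁻¹ * (2 * ξ - s) * Real.sqrt (s + 4 * ξ) *
        Real.log ((Real.sqrt (ζ * (s + 4 * ξ)) - Real.sqrt (s * (ζ - ξ))) /
                  (Real.sqrt (ζ * (s + 4 * ξ)) + Real.sqrt (s * (ζ - ξ)))))

/-! Up to the factor `c`, `Π̂^{mat}(s)` is a constant, plus a multiple of `s`, plus
`(2ξ - s) · √((s + 4ξ) / s) · log ((a - b) / (a + b))` with `a = √(ζ (s + 4ξ))`, `b = √(s (ζ - ξ))`.
The square-root factor is at most `√2` once `s ≥ 4ξ`, and the logarithm stays bounded: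
`(a - b) / (a + b) = (a² - b²) / (a + b)²` with `a² - b² = ξ (s + 4ζ)` and
`(a + b)² ≤ 2 (a² + b²) ≤ 4ζ (s + 2ξ)`, so the ratio lies in `[ξ / (4ζ), 1]`. -/

lemma abs_log_le_log_inv {m x : ℝ} (hm : 0 < m) (hmx : m ≤ x) (hx : x ≤ 1) :
    |Real.log x| ≤ Real.log m⁻¹ := by
  rw [abs_of_nonpos (Real.log_nonpos (hm.le.trans hmx) hx), Real.log_inv, neg_le_neg_iff]
  exact Real.log_le_log hm hmx

lemma sqrt_ratio_mem_Icc {ζ ξ s : ℝ} (hξ : 0 < ξ) (hζξ : ξ < ζ) (hs : 0 ≤ s) :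
    (√(ζ * (s + 4 * ξ)) - √(s * (ζ - ξ))) / (√(ζ * (s + 4 * ξ)) + √(s * (ζ - ξ)))
      ∈ Set.Icc (ξ / (4 * ζ)) 1 := by
  set a := √(ζ * (s + 4 * ξ))
  set b := √(s * (ζ - ξ))
  have hζ : 0 < ζ := hξ.trans hζξ
  have ha2 : a ^ 2 = ζ * (s + 4 * ξ) := Real.sq_sqrt (by positivity)
  have hb2 : b ^ 2 = s * (ζ - ξ) := Real.sq_sqrt (mul_nonneg hs (sub_pos.2 hζξ).le)
  have hb : 0 ≤ b := Real.sqrt_nonneg _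
  have hba : b < a := Real.sqrt_lt_sqrt (by nlinarith) (by nlinarith)
  have hab : 0 < a + b := by linarith
  constructor
  · rw [div_le_div_iff₀ (by positivity) hab]
    nlinarith [sq_nonneg (a - b), mul_pos hξ hab]
  · rw [div_le_one hab]
    linarith

lemma isBigO_log_sqrt_ratio_one {ζ ξ : ℝ} (hξ : 0 < ξ) (hζξ : ξ < ζ) :
    (fun s => Real.log ((√(ζ * (s + 4 * ξ)) - √(s * (ζ - ξ))) /
      (√(ζ * (s + 4 * ξ)) + √(s * (ζ - ξ))))) =O[atTop] fun _ => (1 : ℝ) := by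
  have hm : 0 < ξ / (4 * ζ) := by have := hξ.trans hζξ; positivity
  refine IsBigO.of_bound (Real.log (ξ / (4 * ζ))⁻¹) ?_
  filter_upwards [eventually_ge_atTop 0] with s hs
  obtain ⟨hlow, hup⟩ := sqrt_ratio_mem_Icc hξ hζξ hs
  simpa using abs_log_le_log_inv hm hlow hup

lemma isBigO_inv_sqrt_mul_sqrt_add_one (a : ℝ) :
    (fun s => (√s)⁻¹ * √(s + a)) =O[atTop] fun _ => (1 : ℝ) := by
  refine IsBigO.of_bound (√2) ?_
  filter_upwards [eventually_ge_atTop a, eventually_gt_atTop 0] with s has hs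
  have hsq : √(s + a) ≤ √2 * √s := by
    rw [← Real.sqrt_mul zero_le_two]
    exact Real.sqrt_le_sqrt (by linarith)
  rw [norm_one, mul_one, norm_mul, norm_inv, Real.norm_of_nonneg (Real.sqrt_nonneg _),
    Real.norm_of_nonneg (Real.sqrt_nonneg _), inv_mul_le_iff₀ (Real.sqrt_pos.2 hs), mul_comm]
  exact hsq

lemma isBigO_const_id_atTop (c : ℝ) : (fun _ : ℝ => c) =O[atTop] id :=
  (isLittleO_const_id_atTop c).isBigO

lemma quarkMatterPol_isBigO_id (c : ℝ) {ζ ξ : ℝ} (hξ : 0 < ξ) (hζξ : ξ < ζ) :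
    quarkMatterPol c ζ ξ =O[atTop] id := by
  have hconst := isBigO_const_id_atTop (4 * √(ζ * (ζ - ξ)))
  have hlinear := (isBigO_refl id atTop).const_mul_left (2 * Real.log (√ξ / (√ζ + √(ζ - ξ))))
  have hlogTerm := (isBigO_inv_sqrt_mul_sqrt_add_one (4 * ξ)).mul
    (((isBigO_const_id_atTop (2 * ξ)).sub (isBigO_refl id atTop)).mul
      (isBigO_log_sqrt_ratio_one hξ hζξ))
  exact (((hconst.add (hlinear.congr (fun _ => by simp only [id]; ring) fun _ => rfl)).add
    (hlogTerm.congr (fun _ => by simp only [id]; ring) fun _ => by simp)).const_mul_left c)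

lemma exists_pos_bound_of_isBigO_id_atTop {f : ℝ → ℝ} (hf : f =O[atTop] id) :
    ∃ C s₀ : ℝ, 0 < C ∧ 0 < s₀ ∧ ∀ s : ℝ, s₀ ≤ s → |f s| ≤ C * s := by
  obtain ⟨C, hC, hbound⟩ := hf.exists_pos
  obtain ⟨s₀, hs₀⟩ := eventually_atTop.1 hbound.bound
  refine ⟨C, max s₀ 1, hC, by positivity, fun s hs => ?_⟩
  have hs0 : 0 ≤ s := zero_le_one.trans ((le_max_right _ _).trans hs)
  simpa [abs_of_nonneg hs0] using hs₀ s ((le_max_left _ _).trans hs)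

theorem quarkMatterPol_bigO_atTop_general (c ζ ξ : ℝ) (hξ : 0 < ξ) (hζξ : ξ < ζ) :
    ∃ C s₀ : ℝ, 0 < C ∧ 0 < s₀ ∧ ∀ s : ℝ, s₀ ≤ s → |quarkMatterPol c ζ ξ s| ≤ C * s :=
  exists_pos_bound_of_isBigO_id_atTop (quarkMatterPol_isBigO_id c hξ hζξ)

/-- UV behavior of the quark matter polarization: `Π̂^{mat}(s) = O(s)` as `s → +∞`. -/
theorem quarkMatterPol_bigO_atTop (c ζ ξ : ℝ) (hc : 0 < c) (hξ : 0 < ξ) (hζξ : ξ < ζ) :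
    ∃ C s₀ : ℝ, 0 < C ∧ 0 < s₀ ∧ ∀ s : ℝ, s₀ ≤ s → |quarkMatterPol c ζ ξ s| ≤ C * s :=
  quarkMatterPol_bigO_atTop_general c ζ ξ hξ hζξ
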